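/- arXiv:2303.11466 — 2 statements merged into one kernel-verified Lean document; each statement's English description precedes it below -/
import Mathlib

section
/- Every tree admits an interval coloring. -/
/-- An interval `t`-coloring of `G`: a proper edge-coloring with colors `1,…,t`
such that all colors are used and the set of colors incident to each vertex is
an interval of consecutive integers. -/
def IsIntervalColoring {V : Type*} (G : SimpleGraph V) (t : ℕ) (α : Sym2 V → ℕ) : Prop :=
  (∀ e ∈ G.edgeSet, 1 ≤ α e ∧ α e ≤ t) ∧
  (∀ e ∈ G.edgeSet, ∀ e' ∈ G.edgeSet, e ≠ e' → (∃ v : V, v ∈ e ∧ v ∈ e') → α e ≠ α e') ∧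
  (∀ c : ℕ, 1 ≤ c → c ≤ t → ∃ e ∈ G.edgeSet, α e = c) ∧
  (∀ v : V, ∀ c₁ c c₂ : ℕ,
    (∃ e ∈ G.edgeSet, v ∈ e ∧ α e = c₁) → (∃ e ∈ G.edgeSet, v ∈ e ∧ α e = c₂) →
    c₁ ≤ c → c ≤ c₂ → ∃ e ∈ G.edgeSet, v ∈ e ∧ α e = c)


open SimpleGraph Finset

namespace TreeColor

variable {V : Type*} [Fintype V]

set_option linter.unusedSectionVars false

noncomputable local instance : DecidableEq V := Classical.decEq V

lemma exists_parent {G : SimpleGraph V} (hc : G.Connected) {r v : V} (h : v ≠ r) :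
    ∃ w, G.Adj w v ∧ G.dist r w + 1 = G.dist r v := by
  obtain ⟨p, hp, hlen⟩ := hc.exists_path_of_dist r v
  have hd : 0 < G.dist r v := hc.pos_dist_of_ne (Ne.symm h)
  have hnil : ¬ p.reverse.Nil := by
    rw [SimpleGraph.Walk.not_nil_iff_lt_length, SimpleGraph.Walk.length_reverse]
    omega
  obtain ⟨w, hadj, q, hq⟩ := SimpleGraph.Walk.not_nil_iff.mp hnil
  refine ⟨w, hadj.symm, ?_⟩
  have h1 : G.dist r w ≤ q.length := by
    simpa using SimpleGraph.dist_le q.reverse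
  have h2 : q.length + 1 = G.dist r v := by
    have := congrArg SimpleGraph.Walk.length hq
    simp only [SimpleGraph.Walk.length_reverse, SimpleGraph.Walk.length_cons] at this
    omega
  have h3 : G.dist r v ≤ G.dist r w + 1 := by
    have htri := hc.dist_triangle (u := r) (v := w) (w := v)
    have hone : G.dist w v = 1 := SimpleGraph.dist_eq_one_iff_adj.mpr hadj.symm
    omega
  omega

lemma concat_path {G : SimpleGraph V} {u v w : V} {p : G.Walk u v} (hp : p.IsPath)
    (hw : w ∉ p.support) (h : G.Adj v w) : (p.concat h).IsPath := by
  rw [SimpleGraph.Walk.isPath_def, SimpleGraph.Walk.support_concat,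
    List.nodup_append]
  exact ⟨hp.support_nodup, List.nodup_singleton _, by
    intro a ha b hb hab; simp only [List.mem_singleton] at hb; subst hb; subst hab; exact hw ha⟩

lemma parent_unique {G : SimpleGraph V} (hc : G.Connected) (hg : G.IsAcyclic) {r v w w' : V}
    (h1 : G.Adj w v) (h2 : G.dist r w + 1 = G.dist r v)
    (h1' : G.Adj w' v) (h2' : G.dist r w' + 1 = G.dist r v) : w = w' := by
  obtain ⟨p, hp, hlen⟩ := hc.exists_path_of_dist r w
  obtain ⟨p', hp', hlen'⟩ := hc.exists_path_of_dist r w'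
  have hvp : v ∉ p.support := by
    intro hv
    have ht1 : G.dist r v ≤ (p.takeUntil v hv).length := SimpleGraph.dist_le _
    have ht2 := SimpleGraph.Walk.length_takeUntil_le p hv
    omega
  have hvp' : v ∉ p'.support := by
    intro hv
    have ht1 : G.dist r v ≤ (p'.takeUntil v hv).length := SimpleGraph.dist_le _
    have ht2 := SimpleGraph.Walk.length_takeUntil_le p' hv
    omega
  have hq : (p.concat h1).IsPath := concat_path hp hvp h1
  have hq' : (p'.concat h1').IsPath := concat_path hp' hvp' h1'
  have heq := hg.path_unique ⟨p.concat h1, hq⟩ ⟨p'.concat h1', hq'⟩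
  have heqw : p.concat h1 = p'.concat h1' := congrArg Subtype.val heq
  obtain ⟨hv, -⟩ := SimpleGraph.Walk.concat_inj heqw
  exact hv

lemma adj_dist_ne {G : SimpleGraph V} (hc : G.Connected) (hg : G.IsAcyclic) {r u v : V}
    (h : G.Adj u v) : G.dist r u ≠ G.dist r v := by
  intro he
  obtain ⟨p, hp, hlen⟩ := hc.exists_path_of_dist r u
  obtain ⟨p', hp', hlen'⟩ := hc.exists_path_of_dist r v
  have hvp : v ∉ p.support := by
    intro hv
    have ht1 : G.dist r v ≤ (p.takeUntil v hv).length := SimpleGraph.dist_le _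
    have hsp := congrArg SimpleGraph.Walk.length (p.take_spec hv)
    rw [SimpleGraph.Walk.length_append] at hsp
    have hne : (p.dropUntil v hv).length ≠ 0 := by
      intro h0
      exact h.ne' (SimpleGraph.Walk.eq_of_length_eq_zero h0)
    omega
  have hq : (p.concat h).IsPath := concat_path hp hvp h
  have heq := hg.path_unique ⟨p.concat h, hq⟩ ⟨p', hp'⟩
  have heqw : p.concat h = p' := congrArg Subtype.val heq
  have := congrArg SimpleGraph.Walk.length heqw
  rw [SimpleGraph.Walk.length_concat] at this
  omega


variable (G : SimpleGraph V)

noncomputable local instance : DecidableRel G.Adj := Classical.decRel _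

noncomputable def pa (hc : G.Connected) (r : V) (v : V) : V :=
  if h : v = r then r else (exists_parent hc h).choose

lemma pa_adj (hc : G.Connected) (r : V) {v : V} (h : v ≠ r) : G.Adj (pa G hc r v) v := by
  rw [pa, dif_neg h]
  exact (exists_parent hc h).choose_spec.1

lemma pa_dist (hc : G.Connected) (r : V) {v : V} (h : v ≠ r) :
    G.dist r (pa G hc r v) + 1 = G.dist r v := by
  rw [pa, dif_neg h]
  exact (exists_parent hc h).choose_spec.2

noncomputable def children (r u : V) : Finset V :=
  univ.filter (fun w => G.Adj u w ∧ G.dist r w = G.dist r u + 1)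

lemma mem_children {r u w : V} :
    w ∈ children G r u ↔ G.Adj u w ∧ G.dist r w = G.dist r u + 1 := by
  simp [children]

noncomputable def ord (v : V) : ℕ := ((Fintype.equivFin V) v : ℕ)

lemma ord_inj : Function.Injective (ord (V := V)) := fun a b h =>
  (Fintype.equivFin V).injective (Fin.val_injective h)

/-- rank of `v` in a finset `s`. -/
noncomputable def rk (s : Finset V) (v : V) : ℕ := (s.filter (fun w => ord w ≤ ord v)).card

lemma rk_pos {s : Finset V} {v : V} (h : v ∈ s) : 1 ≤ rk s v :=
  Finset.card_pos.mpr ⟨v, Finset.mem_filter.mpr ⟨h, le_refl _⟩⟩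

lemma rk_le (s : Finset V) (v : V) : rk s v ≤ s.card :=
  Finset.card_le_card (Finset.filter_subset _ _)

lemma rk_lt_rk {s : Finset V} {v v' : V} (h' : v' ∈ s) (h : ord v < ord v') :
    rk s v < rk s v' := by
  apply Finset.card_lt_card
  constructor
  · intro x hx
    rw [Finset.mem_filter] at hx ⊢
    exact ⟨hx.1, hx.2.trans h.le⟩
  · intro hsub
    have := hsub (Finset.mem_filter.mpr ⟨h', le_refl _⟩)
    exact absurd (Finset.mem_filter.mp this).2 (not_le.mpr h)

lemma rk_injOn {s : Finset V} {v v' : V} (hv : v ∈ s) (hv' : v' ∈ s)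
    (h : rk s v = rk s v') : v = v' := by
  rcases lt_trichotomy (ord v) (ord v') with hlt | heq | hlt
  · exact absurd h (rk_lt_rk hv' hlt).ne
  · exact ord_inj heq
  · exact absurd h.symm (rk_lt_rk hv hlt).ne

lemma rk_surj {s : Finset V} {i : ℕ} (h1 : 1 ≤ i) (h2 : i ≤ s.card) :
    ∃ v ∈ s, rk s v = i := by
  have := Finset.surj_on_of_inj_on_of_card_le (s := s) (t := Finset.Icc 1 s.card)
    (fun v _ => rk s v) (fun v hv => Finset.mem_Icc.mpr ⟨rk_pos hv, rk_le s v⟩)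
    (fun a b ha hb hab => rk_injOn ha hb hab)
    (by rw [Nat.card_Icc]; omega)
  obtain ⟨a, ha, hrk⟩ := this i (Finset.mem_Icc.mpr ⟨h1, h2⟩)
  exact ⟨a, ha, hrk.symm⟩

noncomputable def idx (hc : G.Connected) (r : V) (v : V) : ℕ :=
  rk (children G r (pa G hc r v)) v

noncomputable def col (hc : G.Connected) (r : V) (v : V) : ℕ :=
  if h : v = r then 0 else col hc r (pa G hc r v) + idx G hc r v
termination_by G.dist r v
decreasing_by
  have := pa_dist G hc r h
  omega


lemma col_r (hc : G.Connected) (r : V) : col G hc r r = 0 := by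
  rw [col]
  simp

lemma col_ne (hc : G.Connected) (r : V) {v : V} (h : v ≠ r) :
    col G hc r v = col G hc r (pa G hc r v) + idx G hc r v := by
  rw [col]
  simp [h]

lemma ne_r_of_mem_children {r u w : V} (h : w ∈ children G r u) : w ≠ r := by
  intro he
  subst he
  have := ((mem_children G).mp h).2
  simp [SimpleGraph.dist_self] at this

lemma mem_children_pa (hc : G.Connected) (r : V) {v : V} (h : v ≠ r) :
    v ∈ children G r (pa G hc r v) :=
  (mem_children G).mpr ⟨pa_adj G hc r h, (pa_dist G hc r h).symm⟩

lemma pa_eq (hc : G.Connected) (hg : G.IsAcyclic) (r : V) {u w : V} (ha : G.Adj u w)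
    (hd : G.dist r w = G.dist r u + 1) : pa G hc r w = u := by
  have hw : w ≠ r := by
    intro he
    subst he
    simp [SimpleGraph.dist_self] at hd
  exact parent_unique hc hg (pa_adj G hc r hw) (pa_dist G hc r hw) ha hd.symm

lemma idx_pos (hc : G.Connected) (r : V) {v : V} (h : v ≠ r) : 1 ≤ idx G hc r v :=
  rk_pos (mem_children_pa G hc r h)

lemma col_pos (hc : G.Connected) (r : V) {v : V} (h : v ≠ r) : 1 ≤ col G hc r v := by
  rw [col_ne G hc r h]
  have := idx_pos G hc r h
  omega

lemma col_child (hc : G.Connected) (hg : G.IsAcyclic) (r : V) {u w : V}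
    (h : w ∈ children G r u) :
    col G hc r w = col G hc r u + rk (children G r u) w := by
  obtain ⟨ha, hd⟩ := (mem_children G).mp h
  have hpa : pa G hc r w = u := pa_eq G hc hg r ha hd
  rw [col_ne G hc r (ne_r_of_mem_children G h), idx, hpa]

lemma edge_orient (hc : G.Connected) (hg : G.IsAcyclic) (r : V) {a b : V} (h : G.Adj a b) :
    b ∈ children G r a ∨ a ∈ children G r b := by
  have h1 : G.dist r a ≠ G.dist r b := adj_dist_ne hc hg h
  have hab : G.dist a b = 1 := SimpleGraph.dist_eq_one_iff_adj.mpr h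
  have hba : G.dist b a = 1 := SimpleGraph.dist_eq_one_iff_adj.mpr h.symm
  have h2 : G.dist r b ≤ G.dist r a + G.dist a b := hc.dist_triangle
  have h3 : G.dist r a ≤ G.dist r b + G.dist b a := hc.dist_triangle
  rcases Nat.lt_or_ge (G.dist r a) (G.dist r b) with hlt | hge
  · exact Or.inl ((mem_children G).mpr ⟨h, by omega⟩)
  · exact Or.inr ((mem_children G).mpr ⟨h.symm, by omega⟩)

noncomputable def ecol (hc : G.Connected) (r : V) : Sym2 V → ℕ :=
  Sym2.lift ⟨fun a b => max (col G hc r a) (col G hc r b), fun a b => by simp [max_comm]⟩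

lemma col_lt_col_child (hc : G.Connected) (hg : G.IsAcyclic) (r : V) {u w : V}
    (h : w ∈ children G r u) : col G hc r u < col G hc r w := by
  rw [col_child G hc hg r h]
  have := rk_pos h
  omega

lemma ecol_child (hc : G.Connected) (hg : G.IsAcyclic) (r : V) {u w : V}
    (h : w ∈ children G r u) : ecol G hc r s(u, w) = col G hc r w := by
  rw [ecol, Sym2.lift_mk]
  exact max_eq_right (col_lt_col_child G hc hg r h).le

lemma edge_repr (hc : G.Connected) (hg : G.IsAcyclic) (r : V) {e : Sym2 V}
    (he : e ∈ G.edgeSet) : ∃ u w, w ∈ children G r u ∧ e = s(u, w) := by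
  induction e with
  | _ a b =>
    rw [SimpleGraph.mem_edgeSet] at he
    rcases edge_orient G hc hg r he with h | h
    · exact ⟨a, b, h, rfl⟩
    · exact ⟨b, a, h, Sym2.eq_swap⟩

lemma col_pred (hc : G.Connected) (hg : G.IsAcyclic) (r : V) {v : V} {n : ℕ} (hv : v ≠ r)
    (h : col G hc r v = n + 1) : n = 0 ∨ ∃ w, w ≠ r ∧ col G hc r w = n := by
  have hmem : v ∈ children G r (pa G hc r v) := mem_children_pa G hc r hv
  have hcv := col_child G hc hg r hmem
  have hi1 : 1 ≤ rk (children G r (pa G hc r v)) v := rk_pos hmem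
  by_cases h2 : 2 ≤ rk (children G r (pa G hc r v)) v
  · obtain ⟨w, hw, hrkw⟩ := rk_surj (s := children G r (pa G hc r v))
      (i := rk (children G r (pa G hc r v)) v - 1) (by omega)
      (by have := rk_le (children G r (pa G hc r v)) v; omega)
    refine Or.inr ⟨w, ne_r_of_mem_children G hw, ?_⟩
    rw [col_child G hc hg r hw, hrkw]
    omega
  · have hcu : col G hc r (pa G hc r v) = n := by omega
    by_cases hur : pa G hc r v = r
    · left
      rw [hur, col_r] at hcu
      omega
    · exact Or.inr ⟨pa G hc r v, hur, hcu⟩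

lemma col_descend (hc : G.Connected) (hg : G.IsAcyclic) (r : V) (c : ℕ) (hcpos : 1 ≤ c) :
    ∀ k : ℕ, (∃ v, v ≠ r ∧ col G hc r v = c + k) → ∃ v, v ≠ r ∧ col G hc r v = c := by
  intro k
  induction k with
  | zero => simpa
  | succ k ih =>
    rintro ⟨v, hv, hcol⟩
    rcases col_pred G hc hg r hv (n := c + k) (by omega) with h0 | ⟨w, hw, hcw⟩
    · omega
    · exact ih ⟨w, hw, hcw⟩

lemma incident_iff (hc : G.Connected) (hg : G.IsAcyclic) (r : V) (x : V) (c : ℕ) :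
    (∃ e ∈ G.edgeSet, x ∈ e ∧ ecol G hc r e = c) ↔
    ((if x = r then 1 else col G hc r x) ≤ c ∧
      c ≤ col G hc r x + (children G r x).card) := by
  constructor
  · rintro ⟨e, he, hx, hcol⟩
    obtain ⟨u, w, hw, rfl⟩ := edge_repr G hc hg r he
    rw [ecol_child G hc hg r hw] at hcol
    rw [Sym2.mem_iff] at hx
    rcases hx with rfl | rfl
    · -- x = u, c = col w = col x + rk w
      have hcw := col_child G hc hg r hw
      have h1 := rk_pos hw
      have h2 := rk_le (children G r x) w
      constructor
      · split <;> omega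
      · omega
    · -- x = w : c = col x, x child of u
      have hxr : x ≠ r := ne_r_of_mem_children G hw
      rw [if_neg hxr]
      omega
  · rintro ⟨hlo, hhi⟩
    by_cases hxr : x = r
    · rw [if_pos hxr] at hlo
      rw [hxr] at hhi ⊢
      rw [col_r] at hhi
      obtain ⟨w, hw, hrkw⟩ := rk_surj (s := children G r r) (i := c) hlo (by omega)
      refine ⟨s(r, w), (G.mem_edgeSet).mpr ((mem_children G).mp hw).1,
        Sym2.mem_mk_left _ _, ?_⟩
      rw [ecol_child G hc hg r hw, col_child G hc hg r hw, col_r, hrkw]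
      omega
    · rw [if_neg hxr] at hlo
      rcases Nat.eq_or_lt_of_le hlo with heq | hlt
      · refine ⟨s(pa G hc r x, x), (G.mem_edgeSet).mpr (pa_adj G hc r hxr),
          Sym2.mem_mk_right _ _, ?_⟩
        rw [ecol_child G hc hg r (mem_children_pa G hc r hxr)]
        omega
      · obtain ⟨w, hw, hrkw⟩ := rk_surj (s := children G r x) (i := c - col G hc r x)
          (by omega) (by omega)
        refine ⟨s(x, w), (G.mem_edgeSet).mpr ((mem_children G).mp hw).1,
          Sym2.mem_mk_left _ _, ?_⟩
        rw [ecol_child G hc hg r hw, col_child G hc hg r hw, hrkw]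
        omega

end TreeColor

open TreeColor in
theorem tree_interval_colorable' {V : Type*} [Fintype V]
    (G : SimpleGraph V) (hconn : G.Connected) (hacyclic : G.IsAcyclic) :
    ∃ (t : ℕ) (α : Sym2 V → ℕ),
      (∀ e ∈ G.edgeSet, 1 ≤ α e ∧ α e ≤ t) ∧
      (∀ e ∈ G.edgeSet, ∀ e' ∈ G.edgeSet, e ≠ e' → (∃ v : V, v ∈ e ∧ v ∈ e') → α e ≠ α e') ∧
      (∀ c : ℕ, 1 ≤ c → c ≤ t → ∃ e ∈ G.edgeSet, α e = c) ∧
      (∀ v : V, ∀ c₁ c c₂ : ℕ,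
        (∃ e ∈ G.edgeSet, v ∈ e ∧ α e = c₁) → (∃ e ∈ G.edgeSet, v ∈ e ∧ α e = c₂) →
        c₁ ≤ c → c ≤ c₂ → ∃ e ∈ G.edgeSet, v ∈ e ∧ α e = c) := by
  haveI : Nonempty V := hconn.nonempty
  obtain ⟨r⟩ := hconn.nonempty
  refine ⟨Finset.univ.sup (col G hconn r), ecol G hconn r, ?_, ?_, ?_, ?_⟩
  · intro e he
    obtain ⟨u, w, hw, rfl⟩ := edge_repr G hconn hacyclic r he
    rw [ecol_child G hconn hacyclic r hw]
    exact ⟨col_pos G hconn r (ne_r_of_mem_children G hw),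
      Finset.le_sup (Finset.mem_univ w)⟩
  · rintro e he e' he' hne ⟨x, hxe, hxe'⟩ hcc
    obtain ⟨u, w, hw, rfl⟩ := edge_repr G hconn hacyclic r he
    obtain ⟨u', w', hw', rfl⟩ := edge_repr G hconn hacyclic r he'
    rw [ecol_child G hconn hacyclic r hw, ecol_child G hconn hacyclic r hw'] at hcc
    have hpa : pa G hconn r w = u :=
      pa_eq G hconn hacyclic r ((mem_children G).mp hw).1 ((mem_children G).mp hw).2
    have hpa' : pa G hconn r w' = u' :=
      pa_eq G hconn hacyclic r ((mem_children G).mp hw').1 ((mem_children G).mp hw').2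
    have hww' : w ≠ w' := by
      rintro rfl
      exact hne (by rw [← hpa, ← hpa'])
    rw [Sym2.mem_iff] at hxe hxe'
    rcases hxe with rfl | rfl <;> rcases hxe' with h' | h'
    · -- x = u = u'
      subst h'
      rw [col_child G hconn hacyclic r hw, col_child G hconn hacyclic r hw'] at hcc
      exact hww' (rk_injOn hw hw' (by omega))
    · -- x = u, x = w' : u = w'
      subst h'
      have := col_lt_col_child G hconn hacyclic r hw
      omega
    · -- x = w, x = u' : u' = w
      subst h'
      have := col_lt_col_child G hconn hacyclic r hw'
      omega
    · exact hww' h'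
  · intro c h1 h2
    obtain ⟨v₀, -, hv₀⟩ := Finset.exists_mem_eq_sup Finset.univ Finset.univ_nonempty
      (col G hconn r)
    rw [hv₀] at h2
    have hv₀r : v₀ ≠ r := by
      intro he
      rw [he, col_r] at h2
      omega
    obtain ⟨w, hwr, hcw⟩ := col_descend G hconn hacyclic r c h1 (col G hconn r v₀ - c)
      ⟨v₀, hv₀r, by omega⟩
    refine ⟨s(pa G hconn r w, w), (G.mem_edgeSet).mpr (pa_adj G hconn r hwr), ?_⟩
    rw [ecol_child G hconn hacyclic r (mem_children_pa G hconn r hwr), hcw]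
  · intro v c₁ c c₂ h1 h2 hc1 hc2
    rw [incident_iff G hconn hacyclic r] at h1 h2 ⊢
    exact ⟨le_trans h1.1 hc1, le_trans hc2 h2.2⟩



/-- Every (finite) tree admits an interval coloring. -/
theorem tree_interval_colorable {V : Type*} [Fintype V]
    (G : SimpleGraph V) (hconn : G.Connected) (hacyclic : G.IsAcyclic) :
    ∃ (t : ℕ) (α : Sym2 V → ℕ), IsIntervalColoring G t α := by
  obtain ⟨t, α, h1, h2, h3, h4⟩ := tree_interval_colorable' G hconn hacyclic
  exact ⟨t, α, h1, h2, h3, h4⟩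
end

section
/- In any interval t-coloring α of a graph G with exactly k colors used exactly once, c_1 < ... < c_2 < ... < c_k, with c_0 = 1 and c_{k+1} = t, the number of colors in the open-ended color range [c_{i−1}, c_i] that are used at least twice is at most ⌊(|C'_i| − 2)/2⌋ for 2 ≤ i ≤ k, where C'_i is the set of edges with colors in [c_{i−1}, c_i]. -/
/-!
The two once-used colors `c (i-1)` and `c i` contribute one edge each to `C'_i`, and every
color of the range used at least twice contributes at least two further edges, so
`2 · #(twice-used colors) + 2 ≤ |C'_i|`.
-/

open Finset

namespace Finset

variable {β : Type*} (s : Finset β) (f : β → ℕ)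

theorem card_filter_mem_eq_sum_card_filter_eq (I : Finset ℕ) :
    #{e ∈ s | f e ∈ I} = ∑ x ∈ I, #{e ∈ s | f e = x} := by
  rw [card_eq_sum_card_fiberwise (s := {e ∈ s | f e ∈ I}) (f := f) (t := I)
    (fun e he => (mem_filter.mp he).2)]
  refine sum_congr rfl fun x hx => congrArg card ?_
  ext e
  simp only [mem_filter, and_assoc]
  exact and_congr_right fun _ => ⟨And.right, fun h => ⟨h ▸ hx, h⟩⟩

variable {f}

theorem two_mul_card_reused_add_two_le {I : Finset ℕ} {a b : ℕ} (ha : a ∈ I) (hb : b ∈ I)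
    (hab : a ≠ b) (ha1 : #{e ∈ s | f e = a} = 1) (hb1 : #{e ∈ s | f e = b} = 1) :
    2 * #{x ∈ I | 2 ≤ #{e ∈ s | f e = x}} + 2 ≤ #{e ∈ s | f e ∈ I} := by
  set T := {x ∈ I | 2 ≤ #{e ∈ s | f e = x}}
  have hdisj : Disjoint T {a, b} := by
    simp only [disjoint_insert_right, disjoint_singleton_right, T, mem_filter, ha1, hb1]
    omega
  have hsub : T ∪ {a, b} ⊆ I :=
    union_subset (filter_subset _ _) (insert_subset ha (singleton_subset_iff.mpr hb))
  calc 2 * #T + 2 = ∑ _x ∈ T, 2 + ∑ x ∈ {a, b}, #{e ∈ s | f e = x} := by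
        rw [sum_pair hab, ha1, hb1, sum_const, smul_eq_mul, mul_comm]
    _ ≤ ∑ x ∈ T, #{e ∈ s | f e = x} + ∑ x ∈ {a, b}, #{e ∈ s | f e = x} := by
        gcongr with x hx
        exact (mem_filter.mp hx).2
    _ = ∑ x ∈ T ∪ {a, b}, #{e ∈ s | f e = x} := (sum_union hdisj).symm
    _ ≤ ∑ x ∈ I, #{e ∈ s | f e = x} := sum_le_sum_of_subset hsub
    _ = #{e ∈ s | f e ∈ I} := (card_filter_mem_eq_sum_card_filter_eq s f I).symm

end Finset

theorem Set.ncard_sep_eq_card_filter {β : Type*} {S : Set β} (hS : S.Finite) (P : β → Prop)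
    [DecidablePred P] : {e ∈ S | P e}.ncard = #{e ∈ hS.toFinset | P e} := by
  rw [← Set.ncard_coe_finset]
  congr
  ext e
  simp

theorem twice_used_colors_in_block_bound_general {V : Type*} [Fintype V]
    (G : SimpleGraph V) (α : Sym2 V → ℕ)
    (k : ℕ) (c : ℕ → ℕ)
    (hmono : ∀ i j : ℕ, 1 ≤ i → i < j → j ≤ k → c i < c j)
    (huniq : ∀ x : ℕ, (∃ i : ℕ, 1 ≤ i ∧ i ≤ k ∧ c i = x) ↔
      {e ∈ G.edgeSet | α e = x}.ncard = 1)
    (i : ℕ) (hi2 : 2 ≤ i) (hik : i ≤ k) :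
    {x : ℕ | c (i - 1) ≤ x ∧ x ≤ c i ∧ 2 ≤ {e ∈ G.edgeSet | α e = x}.ncard}.ncard ≤
      ({e ∈ G.edgeSet | c (i - 1) ≤ α e ∧ α e ≤ c i}.ncard - 2) / 2 := by
  classical
  have hfin : G.edgeSet.Finite := Set.toFinite _
  have hlt : c (i - 1) < c i := hmono (i - 1) i (by omega) (by omega) hik
  have hlo := (huniq (c (i - 1))).mp ⟨i - 1, by omega, by omega, rfl⟩
  have hhi := (huniq (c i)).mp ⟨i, by omega, hik, rfl⟩
  have hreused : {x : ℕ | c (i - 1) ≤ x ∧ x ≤ c i ∧ 2 ≤ {e ∈ G.edgeSet | α e = x}.ncard} =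
      ↑{x ∈ Icc (c (i - 1)) (c i) | 2 ≤ {e ∈ G.edgeSet | α e = x}.ncard} := by
    ext x
    simp [and_assoc]
  rw [hreused, Set.ncard_coe_finset]
  simp only [Set.ncard_sep_eq_card_filter hfin] at hlo hhi ⊢
  have hbound := two_mul_card_reused_add_two_le hfin.toFinset
    (left_mem_Icc.mpr hlt.le) (right_mem_Icc.mpr hlt.le) hlt.ne hlo hhi
  simp only [mem_Icc] at hbound
  omega

/-- With `c 1 < ⋯ < c k` all the once-used colors of an interval `t`-coloring
(`c 0 = 1`, `c (k+1) = t`), for `2 ≤ i ≤ k` the number of colors in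
`[c (i-1), c i]` used at least twice is at most `⌊(|C'_i| - 2)/2⌋`. -/
theorem twice_used_colors_in_block_bound {V : Type*} [Fintype V]
    (G : SimpleGraph V) (t : ℕ) (α : Sym2 V → ℕ)
    (hα : IsIntervalColoring G t α) (k : ℕ) (c : ℕ → ℕ)
    (h0 : c 0 = 1) (hk1 : c (k + 1) = t)
    (hmono : ∀ i j : ℕ, 1 ≤ i → i < j → j ≤ k → c i < c j)
    (huniq : ∀ x : ℕ, (∃ i : ℕ, 1 ≤ i ∧ i ≤ k ∧ c i = x) ↔
      {e ∈ G.edgeSet | α e = x}.ncard = 1)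
    (i : ℕ) (hi2 : 2 ≤ i) (hik : i ≤ k) :
    {x : ℕ | c (i - 1) ≤ x ∧ x ≤ c i ∧ 2 ≤ {e ∈ G.edgeSet | α e = x}.ncard}.ncard ≤
      ({e ∈ G.edgeSet | c (i - 1) ≤ α e ∧ α e ≤ c i}.ncard - 2) / 2 :=
  twice_used_colors_in_block_bound_general G α k c hmono huniq i hi2 hik
end
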